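/- arXiv:2308.16851 — 3 statements merged into one kernel-verified Lean document; each statement's English description precedes it below -/
import Mathlib

section
/- Let G = (V,E) be a graph, let p, q : V → ℂ^d be configurations, and let ω, ω' ∈ ℂ^E be equilibrium stresses of (G,p) and (G,q) respectively. Let V₀ be the set of vertices incident to an edge e with ω(e) ≠ ω'(e), and suppose p(v) = q(v) for all v ∈ V₀. Then for any scalars α, β ∈ ℂ with α + β ≠ 0, the vector ω_{α,β} defined by ω_{α,β}(uv) = (α·ω(uv) + β·ω'(uv))/(α+β) is an equilibrium stress of the configuration αp + βq. -/
open Finset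

/-- `ω` (a symmetric edge-labelling, giving a value `ω u v` for each edge `uv`) is an
equilibrium stress of the configuration `q : V → ℂ^d` of the graph `G`:
for every vertex `v`, `∑_{u : uv ∈ E} ω(uv) (q(u) - q(v)) = 0`. -/
def IsEquilibriumStress {V : Type*} [Fintype V] (G : SimpleGraph V) [DecidableRel G.Adj]
    {d : ℕ} (ω : V → V → ℂ) (q : V → Fin d → ℂ) : Prop :=
  ∀ v : V, ∑ u ∈ G.neighborFinset v, ω v u • (q u - q v) = 0

/-- Let `ω, ω'` be equilibrium stresses of configurations `p, q`
respectively. If `p` and `q` agree on every vertex incident to an edge on which `ω` and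
`ω'` differ, then for all scalars `α, β` with `α + β ≠ 0`, the averaged vector
`ω_{α,β}(uv) = (α ω(uv) + β ω'(uv)) / (α + β)` is an equilibrium stress of the
configuration `α p + β q`. -/
theorem averaged_stress_of_combined_configuration
    {V : Type*} [Fintype V] (G : SimpleGraph V) [DecidableRel G.Adj] {d : ℕ}
    (p q : V → Fin d → ℂ) (ω ω' : V → V → ℂ)
    (hsym : ∀ u v, ω u v = ω v u) (hsym' : ∀ u v, ω' u v = ω' v u)
    (hp : IsEquilibriumStress G ω p) (hq : IsEquilibriumStress G ω' q)
    (hfix : ∀ v u, G.Adj v u → ω v u ≠ ω' v u → p v = q v)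
    (α β : ℂ) (hαβ : α + β ≠ 0) :
    IsEquilibriumStress G (fun u v => (α * ω u v + β * ω' u v) / (α + β))
      (fun v => α • p v + β • q v) := by
  intro v
  have key : ∀ u ∈ G.neighborFinset v,
      ((α * ω v u + β * ω' v u) / (α + β)) •
        ((α • p u + β • q u) - (α • p v + β • q v))
      = α • (ω v u • (p u - p v)) + β • (ω' v u • (q u - q v)) := by
    intro u hu
    rw [SimpleGraph.mem_neighborFinset] at hu
    by_cases h : ω v u = ω' v u
    · funext i
      simp only [Pi.smul_apply, Pi.add_apply, Pi.sub_apply, smul_eq_mul, h]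
      field_simp
      ring
    · have hv : p v = q v := hfix v u hu h
      have hu' : p u = q u := hfix u v hu.symm (by
        rw [← hsym, ← hsym']; exact h)
      funext i
      simp only [Pi.smul_apply, Pi.add_apply, Pi.sub_apply, smul_eq_mul, hv, hu']
      field_simp
  calc ∑ u ∈ G.neighborFinset v,
        ((fun u v => (α * ω u v + β * ω' u v) / (α + β)) v u) •
          ((fun v => α • p v + β • q v) u - (fun v => α • p v + β • q v) v)
      = ∑ u ∈ G.neighborFinset v,
          (α • (ω v u • (p u - p v)) + β • (ω' v u • (q u - q v))) :=
        Finset.sum_congr rfl key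
    _ = α • ∑ u ∈ G.neighborFinset v, ω v u • (p u - p v)
        + β • ∑ u ∈ G.neighborFinset v, ω' v u • (q u - q v) := by
        rw [Finset.sum_add_distrib, Finset.smul_sum, Finset.smul_sum]
    _ = 0 := by rw [hp v, hq v, smul_zero, smul_zero, add_zero]
end

section
/- Let G = (V,E) be a graph and u,v ∈ V nonadjacent. Then {u,v} is globally linked in G in ℝ^1 if and only if there exist two internally disjoint u,v-paths in G (equivalently, κ_G(u,v) ≥ 2). -/
/-!
Along a path from `a` to `b`, every edge constraint fixes `q x - q y` up to sign, so
`q a - q b` is a rational combination of the values of `p`, with coefficients supported on the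
path, summing to zero and equal to `±1` at `a`. For a generic `p` these values are linearly
independent over `ℚ`, so two internally disjoint `u`-`v` paths produce the same coefficient
vector, which therefore lives on `{u, v}`: `q u - q v = ±(p u - p v)`.

Conversely, by Menger's theorem for two paths, a nonadjacent pair without two internally
disjoint paths lies in different components or is separated by a single vertex `c`. Reflecting
the side of `v` through `p c` (or the component of `v` through the midpoint of `p u` and `p v`)
preserves all edge lengths but changes `|p u - p v|`.
-/

namespace SimpleGraph

variable {V : Type*} {G : SimpleGraph V}

namespace Walk

def IsInternallyDisjoint {u v : V} (P₁ P₂ : G.Walk u v) : Prop :=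
  ∀ w ∈ P₁.support, w ∈ P₂.support → w = u ∨ w = v

theorem IsInternallyDisjoint.symm {u v : V} {P₁ P₂ : G.Walk u v}
    (h : P₁.IsInternallyDisjoint P₂) : P₂.IsInternallyDisjoint P₁ :=
  fun w h₂ h₁ => h w h₁ h₂

theorem IsInternallyDisjoint.ne {u v : V} {P₁ P₂ : G.Walk u v}
    (h : P₁.IsInternallyDisjoint P₂) (huv : u ≠ v) (hadj : ¬G.Adj u v) : P₁ ≠ P₂ := by
  rintro rfl
  cases P₁ with
  | nil => exact huv rfl
  | @cons _ x _ hux P =>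
    rcases h x (by simp) (by simp) with rfl | rfl
    · exact hux.ne rfl
    · exact hadj hux

theorem IsPath.append {u v w : V} {p : G.Walk u v} {q : G.Walk v w} (hp : p.IsPath)
    (hq : q.IsPath) (h : ∀ x ∈ p.support, x ∈ q.support → x = v) : (p.append q).IsPath := by
  rw [isPath_def, support_append, List.nodup_append]
  refine ⟨hp.support_nodup, hq.support_nodup.sublist (List.tail_sublist _), ?_⟩
  rintro x hx _ hy rfl
  have hv : x = v := h x hx (List.mem_of_mem_tail hy)
  subst hv
  have := hq.support_nodup
  rw [← cons_tail_support, List.nodup_cons] at this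
  exact this.1 hy

theorem exists_eq_append_of_end_mem (S : Set V) {a b : V} (R : G.Walk a b) (hb : b ∈ S) :
    ∃ z ∈ S, ∃ (T : G.Walk a z) (D : G.Walk z b), R = T.append D ∧
      ∀ y ∈ T.support, y ∈ S → y = z := by
  induction R with
  | nil => exact ⟨_, hb, nil, nil, rfl, by simp⟩
  | @cons a x b h R ih =>
    by_cases ha : a ∈ S
    · exact ⟨a, ha, nil, cons h R, rfl, by simp⟩
    obtain ⟨z, hz, T, D, rfl, hT⟩ := ih hb
    refine ⟨z, hz, cons h T, D, rfl, ?_⟩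
    rintro y hy hyS
    rw [support_cons, List.mem_cons] at hy
    rcases hy with rfl | hy
    · exact absurd hyS ha
    · exact hT y hy hyS

end Walk

open Walk

/-- The rerouting step of Menger's theorem for two paths: `T` is the initial segment of a
`u`-`v` path avoiding `x`, up to its first vertex `z` on `P₁` or `P₂`, and the new pair is
`T ++ P₁[z..v]` and `u x P₂`. -/
theorem exists_isInternallyDisjoint_cons {u x v z : V} (h : G.Adj u x) (huv : u ≠ v)
    {P₁ P₂ : G.Walk x v} (hP₁ : P₁.IsPath) (hP₂ : P₂.IsPath) (hdisj : P₁.IsInternallyDisjoint P₂)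
    {T : G.Walk u z} (hT : T.IsPath) (hxT : x ∉ T.support) (hz : z ∈ P₁.support)
    (hTS : ∀ y ∈ T.support, y ∈ P₁.support ∨ y ∈ P₂.support → y = z) :
    ∃ P₁' P₂' : G.Walk u v, P₁'.IsPath ∧ P₂'.IsPath ∧ P₁'.IsInternallyDisjoint P₂' := by
  have hzx : z ≠ x := fun hzx => hxT (hzx ▸ T.end_mem_support)
  have hz_end : z ∈ P₂.support → z = v := fun hz₂ => (hdisj z hz hz₂).resolve_left hzx
  have huP₂ : u ∉ P₂.support := fun hu₂ => by
    have huz : u = z := hTS u T.start_mem_support (Or.inr hu₂)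
    exact huv (huz.trans (hz_end (huz ▸ hu₂)))
  obtain ⟨A, B, -, hB, rfl⟩ := hP₁.mem_support_iff_exists_append.mp hz
  have hxB : x ∉ B.support := fun hx =>
    hP₁.ne_of_mem_support_of_append hzx.symm A.start_mem_support hx rfl
  refine ⟨T.append B, cons h P₂, hT.append hB fun y hyT hyB => hTS y hyT
    (Or.inl ((mem_support_append_iff _ _).mpr (Or.inr hyB))), hP₂.cons huP₂, ?_⟩
  intro y hy₁ hy₂
  rw [support_cons, List.mem_cons] at hy₂
  rcases hy₂ with rfl | hy₂
  · exact Or.inl rfl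
  right
  rcases (mem_support_append_iff _ _).mp hy₁ with hyT | hyB
  · obtain rfl := hTS y hyT (Or.inr hy₂)
    exact hz_end hy₂
  · exact (hdisj y ((mem_support_append_iff _ _).mpr (Or.inr hyB)) hy₂).resolve_left
      fun hyx => hxB (hyx ▸ hyB)

theorem Walk.IsPath.exists_isInternallyDisjoint {u v : V} {Q : G.Walk u v} (hQ : Q.IsPath)
    (hsep : ∀ c, c ≠ u → c ≠ v → ∃ W : G.Walk u v, c ∉ W.support) :
    ∃ P₁ P₂ : G.Walk u v, P₁.IsPath ∧ P₂.IsPath ∧ P₁.IsInternallyDisjoint P₂ := by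
  classical
  induction Q with
  | nil => exact ⟨Walk.nil, Walk.nil, .nil, .nil, fun w hw _ => by simp_all⟩
  | @cons u x v h Q ih =>
    rw [cons_isPath_iff] at hQ
    by_cases hxv : x = v
    · subst hxv
      have hP : (cons h Walk.nil).IsPath := IsPath.nil.cons (by simpa using h.ne)
      exact ⟨cons h Walk.nil, cons h Walk.nil, hP, hP, fun w hw _ => by simpa using hw⟩
    have hsep' : ∀ c, c ≠ x → c ≠ v → ∃ W : G.Walk x v, c ∉ W.support := by
      intro c hcx hcv
      by_cases hcu : c = u
      · exact ⟨Q, hcu ▸ hQ.2⟩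
      obtain ⟨W, hW⟩ := hsep c hcu hcv
      by_cases hxW : x ∈ W.support
      · exact ⟨W.dropUntil x hxW, fun hc => hW (W.support_dropUntil_subset_support hxW hc)⟩
      · exact ⟨cons h.symm W, by simp [hcx, hW]⟩
    obtain ⟨P₁, P₂, hP₁, hP₂, hdisj⟩ := ih hQ.1 hsep'
    have huv : u ≠ v := fun huv => hQ.2 (huv ▸ Q.end_mem_support)
    obtain ⟨R, hR⟩ := hsep x h.ne.symm hxv
    obtain ⟨z, hz, T, D, hTD, hTS⟩ := R.bypass.exists_eq_append_of_end_mem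
      {y | y ∈ P₁.support ∨ y ∈ P₂.support} (Or.inl P₁.end_mem_support)
    have hT : T.IsPath := (hTD ▸ R.bypass_isPath).of_append_left
    have hxT : x ∉ T.support := fun hx =>
      hR (R.support_bypass_subset_support (hTD ▸ (mem_support_append_iff _ _).mpr (Or.inl hx)))
    rcases hz with hz | hz
    · exact exists_isInternallyDisjoint_cons h huv hP₁ hP₂ hdisj hT hxT hz hTS
    · exact exists_isInternallyDisjoint_cons h huv hP₂ hP₁ hdisj.symm hT hxT hz
        fun y hy hyS => hTS y hy hyS.symm

def IsEquivRealization (G : SimpleGraph V) (p q : V → ℝ) : Prop :=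
  ∀ a b, G.Adj a b → |p a - p b| = |q a - q b|

section Reflection

variable {p : V → ℝ} {u v : V}

theorem exists_isEquivRealization_abs_sub_ne (S : Set V) (t : ℝ) (hvS : v ∈ S) (huS : u ∉ S)
    (hpu : p u ≠ t) (hpv : p v ≠ t) (hS : ∀ a b, G.Adj a b → a ∈ S → b ∉ S → p b = t) :
    ∃ q, G.IsEquivRealization p q ∧ |p u - p v| ≠ |q u - q v| := by
  classical
  refine ⟨fun x => if x ∈ S then 2 * t - p x else p x, fun a b hab => ?_, ?_⟩
  · by_cases ha : a ∈ S <;> by_cases hb : b ∈ S <;> simp only [ha, hb, if_true, if_false]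
    · rw [← abs_neg]; ring_nf
    · rw [hS a b hab ha hb, ← abs_neg]; ring_nf
    · rw [hS b a hab.symm hb ha, ← abs_neg]; ring_nf
  · simp only [huS, hvS, if_true, if_false]
    intro h
    rcases abs_eq_abs.mp h with h | h
    · exact hpv (by linarith)
    · exact hpu (by linarith)

theorem exists_isEquivRealization_abs_sub_ne_of_not_reachable (huv : ¬G.Reachable u v)
    (hp : p u ≠ p v) : ∃ q, G.IsEquivRealization p q ∧ |p u - p v| ≠ |q u - q v| :=
  exists_isEquivRealization_abs_sub_ne {x | G.Reachable v x} ((p u + p v) / 2) .rfl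
    (fun h => huv h.symm) (fun h => hp (by linarith)) (fun h => hp (by linarith))
    fun _ _ hab ha hb => (hb (ha.trans hab.reachable)).elim

theorem exists_isEquivRealization_abs_sub_ne_of_forall_mem_support (hp : p.Injective) {c : V}
    (hcu : c ≠ u) (hcv : c ≠ v) (hc : ∀ W : G.Walk u v, c ∈ W.support) :
    ∃ q, G.IsEquivRealization p q ∧ |p u - p v| ≠ |q u - q v| := by
  refine exists_isEquivRealization_abs_sub_ne {x | ∃ W : G.Walk v x, c ∉ W.support} (p c)
    ⟨Walk.nil, by simpa using hcv⟩ (fun ⟨W, hW⟩ => hW (by simpa using hc W.reverse))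
    (hp.ne hcu.symm) (hp.ne hcv.symm) fun a b hab ⟨W, hW⟩ hb => ?_
  obtain rfl | hbc := eq_or_ne b c
  · rfl
  · exact (hb ⟨W.concat hab, by simp [hW, hbc.symm]⟩).elim

end Reflection

theorem IsEquivRealization.exists_sub_eq_linearCombination_of_isPath [Fintype V] {p q : V → ℝ}
    (hq : G.IsEquivRealization p q) {a b : V} {P : G.Walk a b} (hP : P.IsPath) :
    ∃ c : V → ℚ, (∀ w, c w ≠ 0 → w ∈ P.support) ∧ ∑ w, c w = 0 ∧
      (a ≠ b → c a = 1 ∨ c a = -1) ∧ q a - q b = Fintype.linearCombination ℚ p c := by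
  classical
  induction P with
  | nil => exact ⟨0, by simp, by simp, by simp, by simp⟩
  | @cons a x b h P ih =>
    rw [cons_isPath_iff] at hP
    obtain ⟨c, hc, hsum, -, hval⟩ := ih hP.1
    obtain ⟨σ, hσ, hedge⟩ : ∃ σ : ℚ, (σ = 1 ∨ σ = -1) ∧ q a - q x = σ • (p a - p x) := by
      rcases abs_eq_abs.mp (hq a x h) with h' | h'
      · exact ⟨1, Or.inl rfl, by simp [h']⟩
      · exact ⟨-1, Or.inr rfl, by simp [h']⟩
    have hca : c a = 0 := by_contra fun hca => hP.2 (hc a hca)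
    refine ⟨Pi.single a σ - Pi.single x σ + c, fun w hw => ?_, ?_, fun _ => ?_, ?_⟩
    · by_contra hw'
      simp only [support_cons, List.mem_cons, not_or] at hw'
      have hwx : w ≠ x := fun hwx => hw'.2 (hwx ▸ P.start_mem_support)
      have hcw : c w = 0 := by_contra fun hcw => hw'.2 (hc w hcw)
      simp [hw'.1, hwx, hcw] at hw
    · simp [Finset.sum_add_distrib, hsum]
    · simpa [h.ne, hca] using hσ
    · rw [map_add, map_sub, Fintype.linearCombination_apply_single,
        Fintype.linearCombination_apply_single, ← hval, ← smul_sub, ← hedge]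
      ring

theorem IsEquivRealization.abs_sub_eq_of_isInternallyDisjoint [Fintype V] {p q : V → ℝ}
    (hp : LinearIndependent ℚ p) (hq : G.IsEquivRealization p q) {u v : V} (huv : u ≠ v)
    {P₁ P₂ : G.Walk u v} (hP₁ : P₁.IsPath) (hP₂ : P₂.IsPath)
    (hdisj : P₁.IsInternallyDisjoint P₂) : |p u - p v| = |q u - q v| := by
  obtain ⟨c, hc₁, hsum, hcu, hval₁⟩ := hq.exists_sub_eq_linearCombination_of_isPath hP₁
  obtain ⟨c₂, hc₂, -, -, hval₂⟩ := hq.exists_sub_eq_linearCombination_of_isPath hP₂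
  obtain rfl : c = c₂ :=
    linearIndependent_iff_injective_fintypeLinearCombination.mp hp (hval₁.symm.trans hval₂)
  have hzero : ∀ w, w ≠ u ∧ w ≠ v → c w = 0 := fun w ⟨hwu, hwv⟩ => by_contra fun hw =>
    (hdisj w (hc₁ w hw) (hc₂ w hw)).elim hwu hwv
  have hcv : c v = -c u := by
    rw [Fintype.sum_eq_add u v huv hzero] at hsum
    linarith
  have hval : q u - q v = c u • (p u - p v) := by
    rw [hval₁, Fintype.linearCombination_apply, Fintype.sum_eq_add u v huv
      fun w hw => by simp [hzero w hw], hcv, smul_sub, neg_smul, sub_eq_add_neg]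
  rcases hcu huv with h | h <;> simp [hval, h, abs_sub_comm]

end SimpleGraph

open Cardinal in
theorem IsTranscendenceBasis.infinite_of_rat_real {s : Set ℝ}
    (hs : IsTranscendenceBasis ℚ ((↑) : s → ℝ)) : s.Infinite := by
  intro hfin
  have := hs.isAlgebraic
  rw [Subtype.range_coe] at this
  have hK := Algebra.cardinalMk_adjoin_le ℚ s
  have hR := Algebra.IsAlgebraic.cardinalMk_le_max (Algebra.adjoin ℚ s) ℝ
  have hs : #s ≤ ℵ₀ := hfin.countable.le_aleph0
  rw [mk_real] at hR
  rw [Cardinal.mkRat] at hK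
  exact aleph0_lt_continuum.not_ge (hR.trans (max_le (hK.trans (by simp [hs])) le_rfl))

theorem exists_algebraicIndependent_rat_real (V : Type*) [Finite V] :
    ∃ p : V → ℝ, AlgebraicIndependent ℚ p := by
  obtain ⟨s, hs⟩ := exists_isTranscendenceBasis ℚ ℝ
  have := hs.infinite_of_rat_real.to_subtype
  obtain ⟨n, ⟨e⟩⟩ := Finite.exists_equiv_fin V
  let f : V ↪ s := e.toEmbedding.trans (Fin.valEmbedding.trans (Infinite.natEmbedding s))
  exact ⟨_, hs.1.comp f f.injective⟩

open SimpleGraph in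
/-- For a nonadjacent pair `u, v` of vertices of a graph `G`, the pair
`{u,v}` is globally linked in `G` in `ℝ¹` (i.e. for every generic realization
`p : V → ℝ` and every equivalent realization `q`, the distance `|p u - p v|` equals
`|q u - q v|`) if and only if there exist two internally disjoint `u,v`-paths in `G`,
i.e. `κ_G(u,v) ≥ 2`. A realization is generic if its coordinates are algebraically
independent over `ℚ`; realizations `p, q` are equivalent if corresponding edge lengths
agree. -/
theorem globally_linked_in_dim_one_iff_two_disjoint_paths
    {V : Type*} [Fintype V] (G : SimpleGraph V) (u v : V)
    (hne : u ≠ v) (hnadj : ¬ G.Adj u v) :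
    (∀ p : V → ℝ, AlgebraicIndependent ℚ p →
      ∀ q : V → ℝ, (∀ a b : V, G.Adj a b → |p a - p b| = |q a - q b|) →
        |p u - p v| = |q u - q v|) ↔
    (∃ P₁ P₂ : G.Walk u v, P₁.IsPath ∧ P₂.IsPath ∧ P₁ ≠ P₂ ∧
      ∀ w : V, w ∈ P₁.support → w ∈ P₂.support → w = u ∨ w = v) := by
  classical
  constructor
  · intro hlinked
    by_contra hpaths
    obtain ⟨p, hp⟩ := exists_algebraicIndependent_rat_real V
    have hinj : p.Injective := hp.linearIndependent.injective
    obtain ⟨q, hq, hpq⟩ : ∃ q, G.IsEquivRealization p q ∧ |p u - p v| ≠ |q u - q v| := by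
      by_cases hreach : G.Reachable u v
      · by_cases hsep : ∀ c, c ≠ u → c ≠ v → ∃ W : G.Walk u v, c ∉ W.support
        · obtain ⟨P₁, P₂, hP₁, hP₂, hdisj⟩ :=
            hreach.some.bypass_isPath.exists_isInternallyDisjoint hsep
          exact absurd ⟨P₁, P₂, hP₁, hP₂, hdisj.ne hne hnadj, hdisj⟩ hpaths
        push Not at hsep
        obtain ⟨c, hcu, hcv, hc⟩ := hsep
        exact exists_isEquivRealization_abs_sub_ne_of_forall_mem_support hinj hcu hcv hc
      · exact exists_isEquivRealization_abs_sub_ne_of_not_reachable hreach (hinj.ne hne)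
    exact hpq (hlinked p hp q hq)
  · rintro ⟨P₁, P₂, hP₁, hP₂, -, hdisj⟩ p hp q hq
    exact IsEquivRealization.abs_sub_eq_of_isInternallyDisjoint hp.linearIndependent hq hne hP₁ hP₂
      hdisj
end

section
/- Let G = (V,E) be a graph, p: V → ℂ^d a configuration, and ω ∈ ℂ^E an equilibrium stress of (G,p). Let A be a nonsingular (d+1)×(d+1) complex matrix that is feasible for p, meaning λ_v := (A·p̃(v))_{d+1} ≠ 0 for all v ∈ V, where p̃(v) ∈ ℂ^{d+1} is p(v) augmented by a 1 in the last coordinate. Let q(v) be the first d coordinates of A·p̃(v)/λ_v. Then ω' defined by ω'(uv) = λ_u λ_v ω(uv) is an equilibrium stress of (G,q). -/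
open Finset

/-- Let `ω` be an equilibrium stress of `(G,p)`, and let `A` be a
nonsingular `(d+1)×(d+1)` matrix that is feasible for `p`, i.e. the last coordinate
`λ_v = (A p̃(v))_{d+1}` is nonzero for every `v`, where `p̃(v)` is `p(v)` augmented by a
`1`. Let `q(v)` be given by the first `d` coordinates of `A p̃(v) / λ_v`. Then
`ω'(uv) = λ_u λ_v ω(uv)` is an equilibrium stress of `(G,q)`. -/
theorem projective_image_stress
    {V : Type*} [Fintype V] (G : SimpleGraph V) [DecidableRel G.Adj] {d : ℕ}
    (p : V → Fin d → ℂ) (ω : V → V → ℂ)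
    (hsym : ∀ u v, ω u v = ω v u)
    (hω : IsEquilibriumStress G ω p)
    (A : Matrix (Fin (d + 1)) (Fin (d + 1)) ℂ) (hA : IsUnit A.det)
    (lam : V → ℂ) (hlam : ∀ v, lam v = A.mulVec (Fin.snoc (p v) 1) (Fin.last d))
    (hfeas : ∀ v, lam v ≠ 0) :
    IsEquilibriumStress G (fun u v => lam u * lam v * ω u v)
      (fun v => fun i : Fin d => A.mulVec (Fin.snoc (p v) 1) i.castSucc / lam v) := by
  set f : V → Fin (d + 1) → ℂ := fun w => A.mulVec (Fin.snoc (p w) 1) with hf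
  have hsnoc : ∀ u w : V,
      (Fin.snoc (p u) (1 : ℂ) : Fin (d + 1) → ℂ) - Fin.snoc (p w) 1
        = Fin.snoc (p u - p w) 0 := by
    intro u w
    funext j
    refine Fin.lastCases ?_ ?_ j <;> simp
  have key : ∀ (v : V) (j : Fin (d + 1)),
      ∑ u ∈ G.neighborFinset v, ω v u * (f u j - f v j) = 0 := by
    intro v j
    set s : V → Fin (d + 1) → ℂ := fun u => Fin.snoc (p u - p v) (0 : ℂ) with hs
    have h1 : ∀ u, f u - f v = A.mulVecLin (s u) := by
      intro u
      simp only [hs, hf, Matrix.mulVecLin_apply, ← hsnoc u v, Matrix.mulVec_sub]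
    have h2 : ∑ u ∈ G.neighborFinset v, ω v u • s u
        = (Fin.snoc (∑ u ∈ G.neighborFinset v, ω v u • (p u - p v)) (0 : ℂ) : Fin (d+1) → ℂ) := by
      funext j
      refine Fin.lastCases ?_ ?_ j <;>
        simp [hs, Finset.sum_apply, Fin.snoc_last, Fin.snoc_castSucc]
    calc ∑ u ∈ G.neighborFinset v, ω v u * (f u j - f v j)
        = (∑ u ∈ G.neighborFinset v, ω v u • (f u - f v)) j := by
          simp [Finset.sum_apply]
      _ = (∑ u ∈ G.neighborFinset v, A.mulVecLin (ω v u • s u)) j := by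
          have hcg : ∀ u ∈ G.neighborFinset v,
              ω v u • (f u - f v) = A.mulVecLin (ω v u • s u) := fun u _ => by
            rw [h1 u, map_smul]
          rw [Finset.sum_congr rfl hcg]
      _ = (A.mulVecLin (∑ u ∈ G.neighborFinset v, ω v u • s u)) j := by
          rw [map_sum]
      _ = 0 := by
          rw [h2, hω v]
          have : (Fin.snoc (0 : Fin d → ℂ) (0 : ℂ) : Fin (d + 1) → ℂ) = 0 := by
            funext j
            refine Fin.lastCases ?_ ?_ j <;> simp
          rw [this, map_zero]
          rfl
  intro v
  funext i
  rw [Finset.sum_apply]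
  have hterm : ∀ u ∈ G.neighborFinset v,
      ((lam v * lam u * ω v u) •
          ((fun i : Fin d => f u i.castSucc / lam u) - fun i : Fin d => f v i.castSucc / lam v)) i
        = lam v * (ω v u * (f u i.castSucc - f v i.castSucc))
            + f v i.castSucc * (ω v u * (lam v - lam u)) := by
    intro u _
    have hu := hfeas u
    have hv := hfeas v
    simp only [Pi.smul_apply, Pi.sub_apply, smul_eq_mul]
    field_simp
    ring
  rw [Finset.sum_congr rfl hterm, Finset.sum_add_distrib, ← Finset.mul_sum, key v i.castSucc,
    mul_zero, zero_add, ← Finset.mul_sum]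
  have h3 : ∑ u ∈ G.neighborFinset v, ω v u * (lam v - lam u)
      = -∑ u ∈ G.neighborFinset v, ω v u * (f u (Fin.last d) - f v (Fin.last d)) := by
    rw [← Finset.sum_neg_distrib]
    refine Finset.sum_congr rfl fun u _ => ?_
    rw [hlam u, hlam v]
    ring
  rw [h3, key v (Fin.last d), neg_zero, mul_zero]
  rfl
end
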